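/- For every positive integer n and all integers s and j, 2 * ∑_{k=0}^{n-1} C(2n-1, 2k) * L(j(4k+s)) = (-1)^j * (L(j)^(2n-1) * L(j(2n+s-1)) - 5^n * F(j)^(2n-1) * F(j(2n+s-1))). -/

import Mathlib

/-!
Binet: `L m = φ ^ m + ψ ^ m` and `√5 F m = φ ^ m - ψ ^ m` for all integers `m`, since both sides
satisfy the Fibonacci recurrence on `ℤ`. Put `α = φ ^ j`, `β = ψ ^ j`, so `α β = e = (-1) ^ j`.
The left side is then `α ^ s ((1 + α²) ^ N + (1 - α²) ^ N)` plus the same with `β`, `N = 2n - 1`.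
Only even powers of `α²` survive in that sum, so `α²` may be replaced by `e α²`, and
`1 ± e α² = ± e α (α ± β)` because `e² = 1`; with `α + β = L j` and `α - β = √5 F j` this is the
right side.
-/

open Finset

theorem eq_of_fib_recurrence {G : Type*} [AddCommGroup G] {f g : ℤ → G}
    (hf : ∀ j, f j = f (j - 1) + f (j - 2)) (hg : ∀ j, g j = g (j - 1) + g (j - 2))
    (h0 : f 0 = g 0) (h1 : f 1 = g 1) : f = g := by
  have key : ∀ a : ℤ, f a = g a ∧ f (a + 1) = g (a + 1) := by
    intro a
    induction a using Int.induction_on with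
    | zero => exact ⟨h0, by simpa using h1⟩
    | succ k ih =>
      refine ⟨ih.2, ?_⟩
      rw [hf, hg, show (k : ℤ) + 1 + 1 - 1 = k + 1 by ring, show (k : ℤ) + 1 + 1 - 2 = k by ring,
        ih.1, ih.2]
    | pred k ih =>
      have ef := hf (-k + 1)
      have eg := hg (-k + 1)
      rw [show -(k : ℤ) + 1 - 1 = -k by ring, show -(k : ℤ) + 1 - 2 = -k - 1 by ring] at ef eg
      rw [ih.1, ih.2] at ef
      rw [sub_add_cancel]
      exact ⟨add_left_cancel (ef.symm.trans eg), ih.1⟩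
  exact funext fun a => (key a).1

theorem zpow_eq_zpow_sub_one_add_zpow_sub_two {K : Type*} [DivisionRing K] {x : K}
    (hx : x ^ 2 = x + 1) (j : ℤ) : x ^ j = x ^ (j - 1) + x ^ (j - 2) := by
  have hx0 : x ≠ 0 := by rintro rfl; simp at hx
  calc x ^ j = x ^ (j - 2) * x ^ 2 := by rw [← zpow_natCast, ← zpow_add₀ hx0]; norm_num
    _ = x ^ (j - 1) + x ^ (j - 2) := by
      rw [hx, mul_add, mul_one, ← zpow_add_one₀ hx0]; ring_nf

theorem zpow_mul_natCast_add {K : Type*} [DivisionRing K] {x : K} (hx : x ≠ 0) (j s : ℤ) (t : ℕ) :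
    x ^ (j * (t + s)) = (x ^ j) ^ s * (x ^ j) ^ t := by
  rw [add_comm (t : ℤ), zpow_mul, zpow_add₀ (zpow_ne_zero _ hx), zpow_natCast]

theorem neg_one_pow_natAbs {K : Type*} [DivisionRing K] (j : ℤ) :
    (-1 : K) ^ j.natAbs = (-1) ^ j := by
  rcases j.even_or_odd with h | h
  · rw [h.neg_one_zpow, h.natAbs.neg_one_pow]
  · rw [h.neg_one_zpow, h.natAbs.neg_one_pow]

theorem Finset.sum_range_two_mul {M : Type*} [AddCommMonoid M] (f : ℕ → M) (n : ℕ) :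
    ∑ i ∈ range (2 * n), f i = ∑ k ∈ range n, (f (2 * k) + f (2 * k + 1)) := by
  induction n with
  | zero => simp
  | succ n ih => rw [mul_add_one, sum_range_succ, sum_range_succ, sum_range_succ, ih, add_assoc]

theorem one_add_pow_add_one_sub_pow {R : Type*} [CommRing R] (x : R) (n : ℕ) :
    (1 + x) ^ (2 * n + 1) + (1 - x) ^ (2 * n + 1)
      = 2 * ∑ k ∈ range (n + 1), ((2 * n + 1).choose (2 * k) : R) * x ^ (2 * k) := by
  rw [add_comm 1 x, sub_eq_neg_add, add_pow, add_pow, ← sum_add_distrib,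
    show 2 * n + 1 + 1 = 2 * (n + 1) by ring, sum_range_two_mul, mul_sum]
  refine sum_congr rfl fun k _ => ?_
  rw [Even.neg_pow ⟨k, two_mul k⟩, Odd.neg_pow ⟨k, rfl⟩]
  ring

theorem one_add_sq_pow_add_one_sub_sq_pow_of_mul_eq {R : Type*} [CommRing R] {α β e : R}
    (h : α * β = e) (he : e ^ 2 = 1) (n : ℕ) :
    (1 + α ^ 2) ^ (2 * n + 1) + (1 - α ^ 2) ^ (2 * n + 1)
      = e * α ^ (2 * n + 1) * ((α + β) ^ (2 * n + 1) - (α - β) ^ (2 * n + 1)) := by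
  have h_even : (1 + α ^ 2) ^ (2 * n + 1) + (1 - α ^ 2) ^ (2 * n + 1)
      = (1 + e * α ^ 2) ^ (2 * n + 1) + (1 - e * α ^ 2) ^ (2 * n + 1) := by
    simp only [one_add_pow_add_one_sub_pow, mul_pow e (α ^ 2), pow_mul e, he, one_pow, one_mul]
  have h_add : 1 + e * α ^ 2 = e * (α * (α + β)) := by linear_combination -e * h - he
  have h_sub : 1 - e * α ^ 2 = -(e * (α * (α - β))) := by linear_combination -e * h - he
  have h_odd : e ^ (2 * n + 1) = e := by rw [pow_succ, pow_mul, he, one_pow, one_mul]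
  rw [h_even, h_add, h_sub, Odd.neg_pow ⟨n, rfl⟩, mul_pow, mul_pow, mul_pow, mul_pow, h_odd]
  ring

theorem two_mul_sum_choose_mul_pow_four_mul {R : Type*} [CommRing R] {α β e : R}
    (h : α * β = e) (he : e ^ 2 = 1) (a b : R) (n : ℕ) :
    2 * ∑ k ∈ range (n + 1), ((2 * n + 1).choose (2 * k) : R) * (a * α ^ (4 * k) + b * β ^ (4 * k))
      = e * ((α + β) ^ (2 * n + 1) * (a * α ^ (2 * n + 1) + b * β ^ (2 * n + 1))
          - (α - β) ^ (2 * n + 1) * (a * α ^ (2 * n + 1) - b * β ^ (2 * n + 1))) := by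
  have h_split : 2 * ∑ k ∈ range (n + 1),
        ((2 * n + 1).choose (2 * k) : R) * (a * α ^ (4 * k) + b * β ^ (4 * k))
      = a * ((1 + α ^ 2) ^ (2 * n + 1) + (1 - α ^ 2) ^ (2 * n + 1))
        + b * ((1 + β ^ 2) ^ (2 * n + 1) + (1 - β ^ 2) ^ (2 * n + 1)) := by
    simp only [one_add_pow_add_one_sub_pow, mul_sum, ← sum_add_distrib, ← pow_mul]
    refine sum_congr rfl fun k _ => ?_
    ring_nf
  rw [h_split, one_add_sq_pow_add_one_sub_sq_pow_of_mul_eq h he,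
    one_add_sq_pow_add_one_sub_sq_pow_of_mul_eq ((mul_comm β α).trans h) he, add_comm β α,
    ← neg_sub α β, Odd.neg_pow ⟨n, rfl⟩]
  ring

open Real goldenRatio

theorem cast_eq_goldenRatio_zpow_add_goldenConj_zpow {L : ℤ → ℤ} (hL0 : L 0 = 2) (hL1 : L 1 = 1)
    (hL : ∀ j, L j = L (j - 1) + L (j - 2)) (m : ℤ) : (L m : ℝ) = φ ^ m + ψ ^ m := by
  refine congrFun (eq_of_fib_recurrence (f := fun m => (L m : ℝ))
    (g := fun m => φ ^ m + ψ ^ m) (fun j => by exact_mod_cast hL j)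
    (fun j => ?_) (by norm_num [hL0]) (by simp [hL1, goldenRatio_add_goldenConj])) m
  rw [zpow_eq_zpow_sub_one_add_zpow_sub_two goldenRatio_sq j,
    zpow_eq_zpow_sub_one_add_zpow_sub_two goldenConj_sq j]
  ring

theorem sqrt_five_mul_cast_eq_goldenRatio_zpow_sub_goldenConj_zpow {F : ℤ → ℤ} (hF0 : F 0 = 0)
    (hF1 : F 1 = 1) (hF : ∀ j, F j = F (j - 1) + F (j - 2)) (m : ℤ) :
    √5 * F m = φ ^ m - ψ ^ m := by
  refine congrFun (eq_of_fib_recurrence (f := fun m => √5 * (F m : ℝ))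
    (g := fun m => φ ^ m - ψ ^ m)
    (fun j => by simp only [hF j]; push_cast; ring) (fun j => ?_) (by simp [hF0])
    (by simp [hF1, goldenRatio_sub_goldenConj])) m
  rw [zpow_eq_zpow_sub_one_add_zpow_sub_two goldenRatio_sq j,
    zpow_eq_zpow_sub_one_add_zpow_sub_two goldenConj_sq j]
  ring

theorem stmt7 (F : ℤ → ℤ) (hF0 : F 0 = 0) (hF1 : F 1 = 1)
    (hF : ∀ j : ℤ, F j = F (j - 1) + F (j - 2)) (L : ℤ → ℤ) (hL0 : L 0 = 2) (hL1 : L 1 = 1)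
    (hL : ∀ j : ℤ, L j = L (j - 1) + L (j - 2)) (n : ℕ) (hn : 0 < n) (s j : ℤ) :
    2 * ∑ k ∈ Finset.range n, ((2 * n - 1).choose (2 * k) : ℤ) * L (j * (4 * (k : ℤ) + s))
      = (-1 : ℤ) ^ j.natAbs *
        (L j ^ (2 * n - 1) * L (j * (2 * (n : ℤ) + s - 1))
          - 5 ^ n * F j ^ (2 * n - 1) * F (j * (2 * (n : ℤ) + s - 1))) := by
  obtain ⟨m, rfl⟩ : ∃ m, n = m + 1 := ⟨n - 1, by omega⟩
  have h_lucas (t : ℕ) : (L (j * (t + s)) : ℝ)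
      = (φ ^ j) ^ s * (φ ^ j) ^ t + (ψ ^ j) ^ s * (ψ ^ j) ^ t := by
    rw [cast_eq_goldenRatio_zpow_add_goldenConj_zpow hL0 hL1 hL, zpow_mul_natCast_add goldenRatio_ne_zero,
      zpow_mul_natCast_add goldenConj_ne_zero]
  have h_fib (t : ℕ) : √5 * (F (j * (t + s)) : ℝ)
      = (φ ^ j) ^ s * (φ ^ j) ^ t - (ψ ^ j) ^ s * (ψ ^ j) ^ t := by
    rw [sqrt_five_mul_cast_eq_goldenRatio_zpow_sub_goldenConj_zpow hF0 hF1 hF,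
      zpow_mul_natCast_add goldenRatio_ne_zero, zpow_mul_natCast_add goldenConj_ne_zero]
  have h_mul : φ ^ j * ψ ^ j = (-1 : ℝ) ^ j.natAbs := by
    rw [← mul_zpow, goldenRatio_mul_goldenConj, neg_one_pow_natAbs]
  have h_sq : ((-1 : ℝ) ^ j.natAbs) ^ 2 = 1 := by rw [← pow_mul, pow_mul', neg_one_sq, one_pow]
  have key := two_mul_sum_choose_mul_pow_four_mul h_mul h_sq ((φ ^ j) ^ s) ((ψ ^ j) ^ s) m
  apply Int.cast_injective (α := ℝ)
  rw [show 2 * (m + 1) - 1 = 2 * m + 1 by omega]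
  push_cast
  have h_arg : j * (2 * ((m : ℤ) + 1) + s - 1) = j * (((2 * m + 1 : ℕ) : ℤ) + s) := by
    push_cast; ring
  have h_five : √5 ^ (2 * m + 2) = 5 ^ (m + 1) := by
    rw [show 2 * m + 2 = 2 * (m + 1) by ring, pow_mul, Real.sq_sqrt (by norm_num)]
  have h_four (k : ℕ) : j * (4 * (k : ℤ) + s) = j * (((4 * k : ℕ) : ℤ) + s) := by push_cast; rfl
  rw [h_arg]
  simp only [h_four, h_lucas]
  rw [key, cast_eq_goldenRatio_zpow_add_goldenConj_zpow hL0 hL1 hL j, ← h_fib (2 * m + 1),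
    ← sqrt_five_mul_cast_eq_goldenRatio_zpow_sub_goldenConj_zpow hF0 hF1 hF j, ← h_five]
  ring
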